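/- For every n ≥ 1, every element of Lie(n) is primitive: for every complete binary tree T with n leaves and every σ ∈ S_n, Δ̃(T(σ)) = 0. -/

import Mathlib

/-- The free module on words of positive integers, with coefficients in `R`.
`ℚ[S_n]` is identified with the span of the permutation words of {1,…,n}. -/
abbrev FW (R : Type) [CommRing R] := (List ℕ) →₀ R

variable {R : Type} [CommRing R]

/-- Concatenation product, extended bilinearly. -/
noncomputable def catW (x y : FW R) : FW R :=
  x.sum fun u a => y.sum fun v b => Finsupp.single (u ++ v) (a * b)

/-- The bracket [x,y] = x·y − y·x of the concatenation product. -/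
noncomputable def brakW (x y : FW R) : FW R := catW x y - catW y x

/-- (Incomplete) binary trees; `nil` is the empty tree. The complete binary tree with
`t.nodes + 1` leaves whose internal nodes form `t` is implicit in the definitions below. -/
inductive BT
  | nil : BT
  | nd : BT → BT → BT
deriving DecidableEq

/-- Number of nodes of a binary tree. -/
def BT.nodes : BT → ℕ
  | .nil => 0
  | .nd l r => l.nodes + r.nodes + 1

/-- The evaluation T(σ) of the complete binary tree `T` whose internal nodes form `t`, with
leaves labelled left to right by the word `w`: each leaf gets the one-letter word of its label
and each internal node the bracket of concatenation. -/
noncomputable def evalBT : BT → List ℕ → FW R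
  | .nil, w => Finsupp.single w 1
  | .nd l r, w => brakW (evalBT l (w.take (l.nodes + 1))) (evalBT r (w.drop (l.nodes + 1)))

/-- The standardization of a word with distinct letters: each letter is replaced by its rank. -/
def stdW (w : List ℕ) : List ℕ := w.map fun x => (w.filter (· ≤ x)).length

/-- The set of permutation words of {1, …, n}. -/
def permWords (n : ℕ) : Finset (List ℕ) := (List.range' 1 n).permutations.toFinset

/-- Convolution α⋆β of two permutation words: the sum of all permutation words γ of size
|α|+|β| with std(γ(1)⋯γ(m)) = α and std(γ(m+1)⋯γ(m+n)) = β. -/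
noncomputable def convW (u v : List ℕ) : FW R :=
  ∑ γ ∈ (permWords (u.length + v.length)).filter
      (fun γ => stdW (γ.take u.length) = u ∧ stdW (γ.drop u.length) = v),
    Finsupp.single γ 1

/-- The convolution product, extended bilinearly. -/
noncomputable def starW (x y : FW R) : FW R :=
  x.sum fun u a => y.sum fun v b => (a * b) • convW u v

/-- Whether the word `w` is an admissible labelling of (the completion of) `t`: at each internal
node, the smallest label lies in the left subtree and the largest in the right subtree. -/
def admB : BT → List ℕ → Bool
  | .nil, _ => true
  | .nd l r, w =>
    admB l (w.take (l.nodes + 1)) && admB r (w.drop (l.nodes + 1))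
      && decide ((w.take (l.nodes + 1)).minimum = w.minimum)
      && decide ((w.drop (l.nodes + 1)).maximum = w.maximum)

/-- c_t: the sum of the evaluations T(σ) over all admissible labellings σ of the complete
binary tree whose internal nodes form `t`. -/
noncomputable def cElt (t : BT) : FW R :=
  ∑ w ∈ (permWords (t.nodes + 1)).filter (fun w => admB t w = true), evalBT t w


/-- The target module for the reduced coproduct: the free module on pairs of words,
modelling ⊕_i ℚ[S_i] ⊗ ℚ[S_{n−i}]. -/
abbrev FW2 (R : Type) [CommRing R] := (List ℕ × List ℕ) →₀ R

/-- The reduced coproduct of a permutation word of {1,…,n}: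
Δ̃(w) = Σ_{i=1}^{n−1} w_{≤i} ⊗ std(w_{>i}), where w_{≤i} is the subword of letters ≤ i and
w_{>i} the subword of letters > i. -/
noncomputable def copW (w : List ℕ) : FW2 R :=
  ∑ i ∈ Finset.Ioo 0 w.length,
    Finsupp.single (w.filter (· ≤ i), stdW (w.filter (fun x => i < x))) 1

/-- The reduced coproduct, extended linearly. -/
noncomputable def coprodW (x : FW R) : FW2 R := x.sum fun w a => a • copW w

/-!
Fix a cut point `i` and split every word into its subword of letters `≤ i` and its subword of
letters `> i`. Extended linearly, this splitting is multiplicative from the concatenation algebra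
to the componentwise concatenation algebra on pairs of words. A Lie monomial `T(σ)` all of whose
letters are on one side is sent to `T(σ) ⊗ 1` or `1 ⊗ T(σ)`, and these two kinds of elements
commute. By induction on the tree, a Lie monomial with letters on both sides is therefore sent
to `0`: at the root either one branch already has letters on both sides, or the two branches lie
on opposite sides and their bracket is a commutator of commuting elements. For `σ ∈ S_n` and
`0 < i < n` the letters `1` and `n` lie on opposite sides, so every term of `Δ̃(T(σ))` vanishes.
-/

noncomputable def catPair (x y : FW2 R) : FW2 R :=
  x.sum fun u a => y.sum fun v b => Finsupp.single (u.1 ++ v.1, u.2 ++ v.2) (a * b)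

def splitWord (p : ℕ → Bool) (u : List ℕ) : List ℕ × List ℕ :=
  (u.filter p, u.filter fun x => !p x)

noncomputable def splitW (p : ℕ → Bool) (x : FW R) : FW2 R :=
  Finsupp.mapDomain (splitWord p) x

def inclWord (b : Bool) (u : List ℕ) : List ℕ × List ℕ :=
  if b then (u, []) else ([], u)

noncomputable def inclW (b : Bool) (x : FW R) : FW2 R :=
  Finsupp.mapDomain (inclWord b) x

lemma catPair_zero_left (y : FW2 R) : catPair 0 y = 0 := Finsupp.sum_zero_index

lemma catPair_zero_right (x : FW2 R) : catPair x 0 = 0 := by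
  simp [catPair]

lemma catPair_mapDomain (f g : List ℕ → List ℕ × List ℕ) (x y : FW R) :
    catPair (Finsupp.mapDomain f x) (Finsupp.mapDomain g y)
      = x.sum fun u a => y.sum fun v b =>
          Finsupp.single ((f u).1 ++ (g v).1, (f u).2 ++ (g v).2) (a * b) := by
  unfold catPair
  rw [Finsupp.sum_mapDomain_index (by simp)
    (by intro _ _ _; simp [add_mul, Finsupp.single_add, Finsupp.sum_add])]
  refine Finsupp.sum_congr fun u _ => ?_
  rw [Finsupp.sum_mapDomain_index (by simp) (by intro _ _ _; simp [mul_add, Finsupp.single_add])]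

lemma mapDomain_catW (f : List ℕ → List ℕ × List ℕ) (x y : FW R) :
    Finsupp.mapDomain f (catW x y)
      = x.sum fun u a => y.sum fun v b => Finsupp.single (f (u ++ v)) (a * b) := by
  simp only [catW, Finsupp.mapDomain_sum, Finsupp.mapDomain_single]

lemma splitW_catW (p : ℕ → Bool) (x y : FW R) :
    splitW p (catW x y) = catPair (splitW p x) (splitW p y) := by
  simp [splitW, mapDomain_catW, catPair_mapDomain, splitWord, List.filter_append]

lemma splitW_brakW (p : ℕ → Bool) (x y : FW R) :
    splitW p (brakW x y)
      = catPair (splitW p x) (splitW p y) - catPair (splitW p y) (splitW p x) := by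
  rw [← splitW_catW, ← splitW_catW]
  exact Finsupp.mapDomain_sub

lemma catPair_inclW_inclW (b : Bool) (x y : FW R) :
    catPair (inclW b x) (inclW b y) = inclW b (catW x y) := by
  rw [inclW, inclW, inclW, catPair_mapDomain, mapDomain_catW]
  cases b <;> simp [inclWord]

lemma catPair_inclW_comm {b c : Bool} (hbc : b ≠ c) (x y : FW R) :
    catPair (inclW b x) (inclW c y) = catPair (inclW c y) (inclW b x) := by
  rw [inclW, inclW, catPair_mapDomain, catPair_mapDomain, Finsupp.sum_comm]
  cases b <;> cases c <;> simp_all [inclWord, mul_comm]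

lemma splitWord_of_forall {p : ℕ → Bool} {b : Bool} {u : List ℕ}
    (h : ∀ a ∈ u, p a = b) : splitWord p u = inclWord b u := by
  cases b <;> simpa [splitWord, inclWord, List.filter_eq_self, List.filter_eq_nil_iff] using h

lemma splitW_evalBT_of_forall {p : ℕ → Bool} {b : Bool} :
    ∀ (t : BT) (w : List ℕ), (∀ a ∈ w, p a = b) →
      splitW p (evalBT t w : FW R) = inclW b (evalBT t w)
  | .nil, w, h => by
    simp only [evalBT, splitW, inclW, Finsupp.mapDomain_single, splitWord_of_forall h]
  | .nd l r, w, h => by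
    simp only [evalBT]
    rw [splitW_brakW,
      splitW_evalBT_of_forall l _ fun a ha => h a (List.take_subset _ _ ha),
      splitW_evalBT_of_forall r _ fun a ha => h a (List.drop_subset _ _ ha),
      catPair_inclW_inclW, catPair_inclW_inclW]
    exact Finsupp.mapDomain_sub.symm

lemma splitW_evalBT_eq_zero {p : ℕ → Bool} :
    ∀ (t : BT) (w : List ℕ), w.length = t.nodes + 1 → (¬∃ b, ∀ a ∈ w, p a = b) →
      splitW p (evalBT t w : FW R) = 0
  | .nil, w, hw, hmix => by
    obtain ⟨c, rfl⟩ := List.length_eq_one_iff.mp hw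
    exact absurd ⟨p c, by simp⟩ hmix
  | .nd l r, w, hw, hmix => by
    have hl : (w.take (l.nodes + 1)).length = l.nodes + 1 := by
      simp only [BT.nodes] at hw; simp only [List.length_take]; omega
    have hr : (w.drop (l.nodes + 1)).length = r.nodes + 1 := by
      simp only [BT.nodes] at hw; simp only [List.length_drop]; omega
    simp only [evalBT]
    rw [splitW_brakW]
    by_cases hl' : ∃ b, ∀ a ∈ w.take (l.nodes + 1), p a = b
    swap
    · rw [splitW_evalBT_eq_zero l _ hl hl', catPair_zero_left, catPair_zero_right, sub_zero]
    by_cases hr' : ∃ c, ∀ a ∈ w.drop (l.nodes + 1), p a = c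
    swap
    · rw [splitW_evalBT_eq_zero r _ hr hr', catPair_zero_left, catPair_zero_right, sub_zero]
    obtain ⟨b, hb⟩ := hl'
    obtain ⟨c, hc⟩ := hr'
    have hbc : b ≠ c := by
      rintro rfl
      refine hmix ⟨b, fun a ha => ?_⟩
      rw [← List.take_append_drop (l.nodes + 1) w, List.mem_append] at ha
      exact ha.elim (hb a) (hc a)
    rw [splitW_evalBT_of_forall l _ hb, splitW_evalBT_of_forall r _ hc, catPair_inclW_comm hbc,
      sub_self]

lemma exists_append_of_mem_support_catW {x y : FW R} {u : List ℕ}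
    (hu : u ∈ (catW x y).support) : ∃ a ∈ x.support, ∃ b ∈ y.support, u = a ++ b := by
  classical
  obtain ⟨a, ha, hu⟩ := Finset.mem_biUnion.mp (Finsupp.support_sum hu)
  obtain ⟨b, hb, hu⟩ := Finset.mem_biUnion.mp (Finsupp.support_sum hu)
  exact ⟨a, ha, b, hb, Finset.mem_singleton.mp (Finsupp.support_single_subset hu)⟩

lemma length_of_mem_support_evalBT :
    ∀ (t : BT) (w u : List ℕ), u ∈ (evalBT t w : FW R).support → u.length = w.length
  | .nil, w, u, hu => by
    rw [Finset.mem_singleton.mp (Finsupp.support_single_subset hu)]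
  | .nd l r, w, u, hu => by
    classical
    have hw : (w.take (l.nodes + 1)).length + (w.drop (l.nodes + 1)).length = w.length := by
      rw [← List.length_append, List.take_append_drop]
    simp only [evalBT, brakW] at hu
    rcases Finset.mem_union.mp (Finsupp.support_sub hu) with h | h
    · obtain ⟨a, ha, b, hb, rfl⟩ := exists_append_of_mem_support_catW h
      rw [List.length_append, length_of_mem_support_evalBT l _ a ha,
        length_of_mem_support_evalBT r _ b hb, hw]
    · obtain ⟨a, ha, b, hb, rfl⟩ := exists_append_of_mem_support_catW h
      rw [List.length_append, length_of_mem_support_evalBT r _ a ha,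
        length_of_mem_support_evalBT l _ b hb, add_comm, hw]

lemma coprodW_eq_sum_splitW (n : ℕ) (x : FW R) (hx : ∀ u ∈ x.support, u.length = n) :
    coprodW x = ∑ i ∈ Finset.Ioo 0 n,
      Finsupp.mapDomain (Prod.map id stdW) (splitW (fun a => decide (a ≤ i)) x) := by
  simp only [splitW, ← Finsupp.mapDomain_comp]
  simp only [coprodW, Finsupp.sum, Finsupp.mapDomain]
  rw [Finset.sum_comm]
  refine Finset.sum_congr rfl fun u hu => ?_
  rw [copW, hx u hu, Finset.smul_sum]
  refine Finset.sum_congr rfl fun i _ => ?_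
  simp [splitWord, Finsupp.smul_single, ← decide_not]

theorem stmt8 : ∀ n : ℕ, 1 ≤ n → ∀ t : BT, t.nodes + 1 = n → ∀ w ∈ permWords n,
    coprodW (evalBT t w : FW ℚ) = 0 := by
  intro n hn t ht w hw
  have hperm : w.Perm (List.range' 1 n) := List.mem_permutations.mp (List.mem_toFinset.mp hw)
  have hlen : w.length = n := by simpa using hperm.length_eq
  rw [coprodW_eq_sum_splitW n _ fun u hu => (length_of_mem_support_evalBT t w u hu).trans hlen]
  refine Finset.sum_eq_zero fun i hi => ?_
  obtain ⟨hi0, hin⟩ := Finset.mem_Ioo.mp hi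
  have h1 : 1 ∈ w := hperm.mem_iff.mpr (List.mem_range'_1.mpr ⟨le_rfl, by omega⟩)
  have hnw : n ∈ w := hperm.mem_iff.mpr (List.mem_range'_1.mpr ⟨hn, by omega⟩)
  have hmix : ¬∃ b, ∀ a ∈ w, decide (a ≤ i) = b := by
    rintro ⟨b, hb⟩
    have h1n := (hb 1 h1).trans (hb n hnw).symm
    simp only [decide_eq_decide] at h1n
    omega
  rw [splitW_evalBT_eq_zero t w (hlen.trans ht.symm) hmix, Finsupp.mapDomain_zero]
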